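/- arXiv:2002.06964 — 5 statements merged into one kernel-verified Lean document; each statement's English description precedes it below -/
import Mathlib

section
/- Let V be a finite set and let B ⊆ 2^V be a nonempty Sperner hypergraph. Then the family of inclusion-minimal keys of the pure Horn function Φ_B equals B, i.e. K(Φ_B) = B. -/
open scoped Classical

variable {V : Type*} [Fintype V] [DecidableEq V]

/-- A Sperner hypergraph: no hyperedge contains another one. -/
def SpernerFam (𝓑 : Set (Finset V)) : Prop :=
  ∀ B₁ ∈ 𝓑, ∀ B₂ ∈ 𝓑, B₁ ⊆ B₂ → B₁ = B₂

/-- `T` is a transversal of `𝓑` if it meets every hyperedge. -/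
def IsTransversal (𝓑 : Set (Finset V)) (T : Finset V) : Prop :=
  ∀ B ∈ 𝓑, (T ∩ B).Nonempty

/-- `𝓑^d`: the family of inclusion-minimal transversals of `𝓑`. -/
def dualHyp (𝓑 : Set (Finset V)) : Set (Finset V) :=
  {T | IsTransversal 𝓑 T ∧ ∀ T', IsTransversal 𝓑 T' → T' ⊆ T → T' = T}

/-- A Boolean function `h` on `V` is pure Horn if its set of true assignments contains the
all-true assignment and is closed under componentwise AND. -/
def PureHorn (h : (V → Bool) → Bool) : Prop :=
  h (fun _ => true) = true ∧
  ∀ x y : V → Bool, h x = true → h y = true → h (fun v => x v && y v) = true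

/-- The clause `A → v` is an implicate of `h`: every true assignment of `h` that is true on
every element of `A` is also true at `v`. -/
def Implicate (h : (V → Bool) → Bool) (A : Finset V) (v : V) : Prop :=
  ∀ x : V → Bool, h x = true → (∀ a ∈ A, x a = true) → x v = true

/-- `K` is a key of `h` if `K → v` is an implicate of `h` for every `v ∈ V \ K`. -/
def IsKey (h : (V → Bool) → Bool) (K : Finset V) : Prop :=
  ∀ v ∉ K, Implicate h K v

/-- `𝒦(h)`: the family of inclusion-minimal keys of `h`. -/
def minKeys (h : (V → Bool) → Bool) : Set (Finset V) :=
  {K | IsKey h K ∧ ∀ K', IsKey h K' → K' ⊆ K → K' = K}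

/-- `Φ_𝓑`: the pure Horn function whose true assignments are exactly those `x` such that for
every `B ∈ 𝓑` on which `x` is identically true, `x` is identically true on all of `V`. -/
noncomputable def PhiB (𝓑 : Set (Finset V)) : (V → Bool) → Bool :=
  fun x => decide (∀ B ∈ 𝓑, (∀ u ∈ B, x u = true) → ∀ v : V, x v = true)

/-! A set `K` is a key of `Φ_𝓑` exactly when it contains some `B ∈ 𝓑`. Indeed, if
`K` contains no hyperedge, the characteristic vector of `K` is a true assignment of `Φ_𝓑`, and it
is false outside `K`, which is nonempty because `K` does not contain the hyperedge that `𝓑 ≠ ∅`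
provides. So the keys form the upper closure of `𝓑`, whose minimal elements are those of the
antichain `𝓑`. -/

theorem SpernerFam.isAntichain {α : Type*} {𝓑 : Set (Finset α)} (h𝓑 : SpernerFam 𝓑) :
    IsAntichain (· ≤ ·) 𝓑 :=
  fun _ hB₁ _ hB₂ hne hle => hne (h𝓑 _ hB₁ _ hB₂ hle)

theorem minKeys_eq_setOf_minimal {α : Type*} (h : (α → Bool) → Bool) :
    minKeys h = {K | Minimal (IsKey h) K} := by
  ext K
  simp only [minKeys, Set.mem_ofPred_eq, minimal_iff]
  exact and_congr_right fun _ => forall₃_congr fun _ _ _ => eq_comm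

theorem isKey_phiB_of_mem_upperClosure {𝓑 : Set (Finset V)} {K : Finset V}
    (hK : K ∈ upperClosure 𝓑) : IsKey (PhiB 𝓑) K := by
  obtain ⟨B, hB, hBK⟩ := hK
  intro v _ x hx hxK
  simp only [PhiB, decide_eq_true_eq] at hx
  exact hx B hB (fun u hu => hxK u (hBK hu)) v

theorem phiB_indicator_eq_true_of_notMem_upperClosure {𝓑 : Set (Finset V)} {K : Finset V}
    (hK : K ∉ upperClosure 𝓑) : PhiB 𝓑 (fun v => decide (v ∈ K)) = true := by
  simp only [PhiB, decide_eq_true_eq]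
  intro B hB hBK
  exact absurd ⟨B, hB, fun u hu => by simpa using hBK u hu⟩ hK

theorem mem_upperClosure_of_isKey_phiB {𝓑 : Set (Finset V)} (hne : 𝓑.Nonempty)
    {K : Finset V} (hK : IsKey (PhiB 𝓑) K) : K ∈ upperClosure 𝓑 := by
  by_contra hKB
  obtain ⟨B, hB⟩ := hne
  obtain ⟨v, hv⟩ : ∃ v, v ∉ K := by
    by_contra! hall
    exact hKB ⟨B, hB, fun u _ => hall u⟩
  simpa [hv] using hK v hv _ (phiB_indicator_eq_true_of_notMem_upperClosure hKB) (by simp)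

theorem isKey_phiB_iff {𝓑 : Set (Finset V)} (hne : 𝓑.Nonempty) {K : Finset V} :
    IsKey (PhiB 𝓑) K ↔ K ∈ upperClosure 𝓑 :=
  ⟨mem_upperClosure_of_isKey_phiB hne, isKey_phiB_of_mem_upperClosure⟩

/-- For a nonempty Sperner hypergraph `𝓑 ⊆ 2^V`, the family of inclusion-minimal keys of
the pure Horn function `Φ_𝓑` equals `𝓑`. -/
theorem stmt1 (𝓑 : Set (Finset V)) (hne : 𝓑.Nonempty) (hSp : SpernerFam 𝓑) :
    minKeys (PhiB 𝓑) = 𝓑 := by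
  have hKeys : IsKey (PhiB 𝓑) = (· ∈ upperClosure 𝓑) :=
    funext fun _ => propext (isKey_phiB_iff hne)
  rw [minKeys_eq_setOf_minimal, hKeys]
  ext K
  exact hSp.isAntichain.minimal_mem_upperClosure_iff_mem
end

section
/- Let V be a finite set, let B ⊆ 2^V be a nonempty Sperner hypergraph, and let h be a pure Horn function on V with h ≤ Φ_B (every true assignment of h is a true assignment of Φ_B). Then K(h) ≠ B if and only if there exist a set A ⊆ V, an element v ∈ V∖A such that A → v is an implicate of h, and a minimal transversal T ∈ B^d with T ∩ A = ∅ and v ∈ T. -/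
open scoped Classical

variable {V : Type*} [Fintype V] [DecidableEq V]

/-!
Proof idea. Since `h ≤ Φ_𝓑`, every hyperedge of `𝓑` is a key of `h`. If no triple `(A, v, T)`
exists, every key `K` contains a hyperedge: otherwise `Kᶜ` is a transversal, so it contains a
minimal transversal `T`, and any `v ∈ T` gives the forbidden triple `(K, v, T)`. As `𝓑` is
Sperner, the minimal keys are then exactly the hyperedges. Conversely, given `(A, v, T)`,
minimality of `T` yields a hyperedge inside `Tᶜ ∪ {v}`, so `Tᶜ ∪ {v}` is a key, and with the
implicate `A → v`, `A ⊆ Tᶜ`, so is `Tᶜ`. A minimal key inside `Tᶜ` misses the transversal `T`,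
hence is not a hyperedge.
-/

section Transversals

omit [Fintype V]

variable {𝓑 : Set (Finset V)} {T K : Finset V}

theorem mem_dualHyp_iff : T ∈ dualHyp 𝓑 ↔ Minimal (IsTransversal 𝓑) T := by
  simp only [minimal_iff, dualHyp, Set.mem_ofPred_eq, @eq_comm _ T]

theorem exists_mem_dualHyp_subset (hT : IsTransversal 𝓑 T) : ∃ T' ∈ dualHyp 𝓑, T' ⊆ T := by
  obtain ⟨T', hT'T, hT'⟩ := exists_minimal_le_of_wellFoundedLT _ T hT
  exact ⟨T', mem_dualHyp_iff.2 hT', hT'T⟩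

theorem IsTransversal.nonempty (hT : IsTransversal 𝓑 T) (h𝓑 : 𝓑.Nonempty) : T.Nonempty := by
  obtain ⟨B, hB⟩ := h𝓑
  exact (hT B hB).mono Finset.inter_subset_left

theorem isTransversal_compl_iff [Fintype V] : IsTransversal 𝓑 Kᶜ ↔ ∀ B ∈ 𝓑, ¬ B ⊆ K := by
  simp only [IsTransversal, Finset.not_subset, Finset.Nonempty, Finset.mem_inter,
    Finset.mem_compl, and_comm]

/-- Removing `v` from a minimal transversal `T` leaves a hyperedge uncovered. -/
theorem exists_mem_subset_insert_compl [Fintype V] (hT : T ∈ dualHyp 𝓑) {v : V} (hv : v ∈ T) :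
    ∃ B ∈ 𝓑, B ⊆ insert v Tᶜ := by
  have hnot : ¬ IsTransversal 𝓑 (T.erase v) := fun htr =>
    Finset.notMem_erase v T (by rw [hT.2 _ htr (Finset.erase_subset v T)]; exact hv)
  simp only [IsTransversal, not_forall, Finset.not_nonempty_iff_eq_empty] at hnot
  obtain ⟨B, hB, hBT⟩ := hnot
  refine ⟨B, hB, fun b hb => ?_⟩
  by_cases hbv : b = v
  · exact hbv ▸ Finset.mem_insert_self b _
  · refine Finset.mem_insert_of_mem (Finset.mem_compl.2 fun hbT => ?_)
    simpa [hBT] using Finset.mem_inter.2 ⟨Finset.mem_erase.2 ⟨hbv, hbT⟩, hb⟩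

end Transversals

section Keys

omit [Fintype V] [DecidableEq V]

variable {h : (V → Bool) → Bool} {A K K' : Finset V} {v : V}

theorem Implicate.mono (hAv : Implicate h A v) (hAK : A ⊆ K) : Implicate h K v :=
  fun x hx hxK => hAv x hx fun a ha => hxK a (hAK ha)

theorem IsKey.mono (hK : IsKey h K) (hKK' : K ⊆ K') : IsKey h K' :=
  fun v hv => (hK v fun hvK => hv (hKK' hvK)).mono hKK'

theorem IsKey.of_insert [DecidableEq V] (hK : IsKey h (insert v K)) (hKv : Implicate h K v) :
    IsKey h K := by
  intro u hu x hx hxK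
  by_cases huv : u = v
  · exact huv ▸ hKv x hx hxK
  · refine hK u (by simp [hu, huv]) x hx fun a ha => ?_
    rcases Finset.mem_insert.1 ha with rfl | haK
    exacts [hKv x hx hxK, hxK a haK]

theorem mem_minKeys_iff : K ∈ minKeys h ↔ Minimal (IsKey h) K := by
  simp only [minimal_iff, minKeys, Set.mem_ofPred_eq, @eq_comm _ K]

theorem exists_mem_minKeys_subset (hK : IsKey h K) : ∃ K' ∈ minKeys h, K' ⊆ K := by
  obtain ⟨K', hK'K, hK'⟩ := exists_minimal_le_of_wellFoundedLT _ K hK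
  exact ⟨K', mem_minKeys_iff.2 hK', hK'K⟩

end Keys

section PhiB

variable {𝓑 : Set (Finset V)} {h : (V → Bool) → Bool}

theorem isKey_of_mem (hle : ∀ x : V → Bool, h x = true → PhiB 𝓑 x = true) {B : Finset V}
    (hB : B ∈ 𝓑) : IsKey h B := by
  intro v _ x hx hxB
  have hΦ := hle x hx
  simp only [PhiB, decide_eq_true_eq] at hΦ
  exact hΦ B hB hxB v

theorem minKeys_eq_of_forall_isKey (hSp : SpernerFam 𝓑)
    (hle : ∀ x : V → Bool, h x = true → PhiB 𝓑 x = true)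
    (hkeys : ∀ K, IsKey h K → ∃ B ∈ 𝓑, B ⊆ K) : minKeys h = 𝓑 := by
  ext K
  constructor
  · rintro ⟨hK, hKmin⟩
    obtain ⟨B, hB, hBK⟩ := hkeys K hK
    rwa [← hKmin B (isKey_of_mem hle hB) hBK]
  · intro hK
    refine ⟨isKey_of_mem hle hK, fun K' hK' hK'K => ?_⟩
    obtain ⟨B, hB, hBK'⟩ := hkeys K' hK'
    exact hK'K.antisymm (hSp B hB K hK (hBK'.trans hK'K) ▸ hBK')

theorem isKey_compl_of_mem_dualHyp (hle : ∀ x : V → Bool, h x = true → PhiB 𝓑 x = true)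
    {T A : Finset V} {v : V} (hT : T ∈ dualHyp 𝓑) (hvT : v ∈ T) (hAv : Implicate h A v)
    (hTA : T ∩ A = ∅) : IsKey h Tᶜ := by
  obtain ⟨B, hB, hBT⟩ := exists_mem_subset_insert_compl hT hvT
  have hAT : A ⊆ Tᶜ :=
    Finset.subset_compl_iff_disjoint_right.2 (Finset.disjoint_iff_inter_eq_empty.2 hTA).symm
  exact ((isKey_of_mem hle hB).mono hBT).of_insert (hAv.mono hAT)

end PhiB

theorem stmt2_general (𝓑 : Set (Finset V)) (hne : 𝓑.Nonempty) (hSp : SpernerFam 𝓑)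
    (h : (V → Bool) → Bool)
    (hle : ∀ x : V → Bool, h x = true → PhiB 𝓑 x = true) :
    minKeys h ≠ 𝓑 ↔
      ∃ (A : Finset V) (v : V), v ∉ A ∧ Implicate h A v ∧
        ∃ T ∈ dualHyp 𝓑, T ∩ A = ∅ ∧ v ∈ T := by
  constructor
  · intro hneq
    by_contra! hnone
    refine hneq (minKeys_eq_of_forall_isKey hSp hle fun K hK => ?_)
    by_contra! hno
    obtain ⟨T, hT, hTK⟩ := exists_mem_dualHyp_subset (isTransversal_compl_iff.2 hno)
    obtain ⟨v, hvT⟩ := hT.1.nonempty hne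
    have hvK : v ∉ K := Finset.mem_compl.1 (hTK hvT)
    have hTK' : T ∩ K = ∅ := Finset.disjoint_iff_inter_eq_empty.1
      (Finset.subset_compl_iff_disjoint_right.1 hTK)
    exact hnone K v hvK (hK v hvK) T hT hTK' hvT
  · rintro ⟨A, v, -, hAv, T, hT, hTA, hvT⟩ heq
    obtain ⟨K, hK, hKT⟩ :=
      exists_mem_minKeys_subset (isKey_compl_of_mem_dualHyp hle hT hvT hAv hTA)
    obtain ⟨t, ht⟩ := hT.1 K (heq ▸ hK)
    exact Finset.mem_compl.1 (hKT (Finset.mem_inter.1 ht).2) (Finset.mem_inter.1 ht).1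

/-- For a nonempty Sperner hypergraph `𝓑` and a pure Horn function `h ≤ Φ_𝓑`:
`𝒦(h) ≠ 𝓑` iff there are an implicate `A → v` of `h` and a minimal transversal `T ∈ 𝓑^d`
with `T ∩ A = ∅` and `v ∈ T`. -/
theorem stmt2 (𝓑 : Set (Finset V)) (hne : 𝓑.Nonempty) (hSp : SpernerFam 𝓑)
    (h : (V → Bool) → Bool) (hh : PureHorn h)
    (hle : ∀ x : V → Bool, h x = true → PhiB 𝓑 x = true) :
    minKeys h ≠ 𝓑 ↔
      ∃ (A : Finset V) (v : V), v ∉ A ∧ Implicate h A v ∧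
        ∃ T ∈ dualHyp 𝓑, T ∩ A = ∅ ∧ v ∈ T :=
  stmt2_general 𝓑 hne hSp h hle
end

section
/- Let M be a loopless matroid on a finite nonempty ground set V. Then the family of cocircuits (cuts) of M is a unique key hypergraph, i.e. the cocircuits form a Sperner hypergraph B such that Φ_B is the unique pure Horn function h with K(h) = B. -/
open scoped Classical

variable {V : Type*} [Fintype V] [DecidableEq V]

/-- `𝓑` is a unique key hypergraph: `Φ_𝓑` is the unique pure Horn function `h`
with `𝒦(h) = 𝓑`. -/
def UniqueKeyHypergraph (𝓑 : Set (Finset V)) : Prop :=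
  minKeys (PhiB 𝓑) = 𝓑 ∧
  ∀ h : (V → Bool) → Bool, PureHorn h → minKeys h = 𝓑 → h = PhiB 𝓑

/-- `C` meets every basis of the matroid `M`. -/
def MeetsAllBases (M : Matroid V) (C : Finset V) : Prop :=
  ∀ B : Set V, M.IsBase B → ((C : Set V) ∩ B).Nonempty

/-- A cut (cocircuit) of `M`: an inclusion-minimal set meeting every basis of `M`. -/
def IsCut (M : Matroid V) (C : Finset V) : Prop :=
  MeetsAllBases M C ∧ ∀ C' : Finset V, MeetsAllBases M C' → C' ⊆ C → C' = C


lemma exists_min_subset (P : Finset V → Prop) (S : Finset V) (hS : P S) :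
    ∃ C, C ⊆ S ∧ P C ∧ ∀ C', P C' → C' ⊆ C → C' = C := by
  induction S using Finset.strongInduction with
  | _ S ih =>
    by_cases h : ∃ C', P C' ∧ C' ⊆ S ∧ C' ≠ S
    · obtain ⟨C', hC', hsub, hne⟩ := h
      obtain ⟨C, h1, h2, h3⟩ := ih C' (hsub.ssubset_of_ne hne) hC'
      exact ⟨C, h1.trans hsub, h2, h3⟩
    · push_neg at h
      exact ⟨S, Finset.Subset.refl S, hS, fun C' hC' hsub => h C' hC' hsub⟩

lemma horn_and_finset (h : (V → Bool) → Bool) (hh : PureHorn h) (x0 : V → Bool)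
    (hx0 : h x0 = true) :
    ∀ (D : Finset V) (f : V → V → Bool), (∀ v ∈ D, h (f v) = true) →
      h (fun u => x0 u && decide (∀ v ∈ D, f v u = true)) = true := by
  intro D
  induction D using Finset.induction_on with
  | empty =>
    intro f _
    have he : (fun u => x0 u && decide (∀ v ∈ (∅ : Finset V), f v u = true)) = x0 := by
      funext u; simp
    rw [he]; exact hx0
  | @insert a s ha ih =>
    intro f hf
    have h1 := ih f (fun v hv => hf v (Finset.mem_insert_of_mem hv))
    have h2 : h (f a) = true := hf a (Finset.mem_insert_self a s)
    have h3 := hh.2 _ _ h2 h1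
    have he : (fun u => x0 u && decide (∀ v ∈ insert a s, f v u = true)) =
        (fun u => f a u && (x0 u && decide (∀ v ∈ s, f v u = true))) := by
      funext u
      rw [Bool.eq_iff_iff]
      simp only [Bool.and_eq_true, decide_eq_true_eq, Finset.mem_insert]
      constructor
      · rintro ⟨hx, hall⟩
        exact ⟨hall a (Or.inl rfl), hx, fun v hv => hall v (Or.inr hv)⟩
      · rintro ⟨hfa, hx, hall⟩
        exact ⟨hx, fun v hv => hv.elim (fun h' => h' ▸ hfa) (hall v)⟩
    rw [he]; exact h3

/-- The cuts (cocircuits) of a loopless matroid on a finite nonempty ground set form a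
Sperner hypergraph that is a unique key hypergraph. -/
theorem stmt6 [Nonempty V] (M : Matroid V) (hground : M.E = Set.univ)
    (hloopless : ∀ v : V, M.Indep {v}) :
    SpernerFam {C : Finset V | IsCut M C} ∧
    UniqueKeyHypergraph {C : Finset V | IsCut M C} := by
  have hbase_ne : ∀ B : Set V, M.IsBase B → B.Nonempty := by
    intro B hB
    rcases Set.eq_empty_or_nonempty B with hBe | hBn
    · exfalso
      obtain ⟨v0⟩ := (inferInstance : Nonempty V)
      have hEq := hB.eq_of_subset_indep (hloopless v0) (by simp [hBe])
      rw [hBe] at hEq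
      exact (Set.singleton_nonempty v0).ne_empty hEq.symm
    · exact hBn
  have hmono : ∀ C D : Finset V, MeetsAllBases M C → C ⊆ D → MeetsAllBases M D := by
    intro C D hC hsub B hB
    exact (hC B hB).mono (Set.inter_subset_inter_left _ (Finset.coe_subset.2 hsub))
  have hext : ∀ S : Finset V, MeetsAllBases M S → ∃ C, IsCut M C ∧ C ⊆ S := by
    intro S hS
    obtain ⟨C, h1, h2, h3⟩ := exists_min_subset (MeetsAllBases M) S hS
    exact ⟨C, ⟨h2, h3⟩, h1⟩
  have hnotmeets : ∀ S : Finset V,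
      ¬ MeetsAllBases M S ↔ ∃ B, M.IsBase B ∧ ((S : Set V) ∩ B) = ∅ := by
    intro S
    unfold MeetsAllBases
    push_neg
    simp [Set.not_nonempty_iff_eq_empty]
  have hPhi : ∀ (𝓒 : Set (Finset V)) (x : V → Bool), PhiB 𝓒 x = true ↔
      (∀ C ∈ 𝓒, (∀ u ∈ C, x u = true) → ∀ v, x v = true) := by
    intro 𝓒 x; simp [PhiB]
  set 𝓑 : Set (Finset V) := {C : Finset V | IsCut M C} with h𝓑def
  have hkey_up : ∀ (h : (V → Bool) → Bool) (K K' : Finset V),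
      IsKey h K → K ⊆ K' → IsKey h K' := by
    intro h K K' hK hsub v hv x hx hxK'
    exact hK v (fun hvK => hv (hsub hvK)) x hx (fun a ha => hxK' a (hsub ha))
  have hkeyPhi : ∀ K : Finset V, IsKey (PhiB 𝓑) K ↔ MeetsAllBases M K := by
    intro K
    constructor
    · intro hK
      by_contra hnm
      obtain ⟨B, hB, hKB⟩ := (hnotmeets K).1 hnm
      have hKB' : ∀ w, w ∈ K → w ∈ B → False := by
        intro w h1 h2
        have : w ∈ (K : Set V) ∩ B := ⟨h1, h2⟩
        rw [hKB] at this; exact this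
      obtain ⟨v, hvB⟩ := hbase_ne B hB
      have hvK : v ∉ K := fun hvK => hKB' v hvK hvB
      have hx : PhiB 𝓑 (fun u => decide (u ∈ K)) = true := by
        rw [hPhi]
        intro C hC hCx
        exfalso
        have hC' : IsCut M C := hC
        obtain ⟨w, hw1, hw2⟩ := hC'.1 B hB
        have hwC : w ∈ C := hw1
        have hwK : w ∈ K := by simpa using hCx w hwC
        exact hKB' w hwK hw2
      have h2 := hK v hvK _ hx (fun a ha => by simp [ha])
      simp [hvK] at h2
    · intro hm v hv x hx hxK
      obtain ⟨C, hC, hCK⟩ := hext K hm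
      rw [hPhi] at hx
      exact hx C hC (fun u hu => hxK u (hCK hu)) v
  have hmkPhi : minKeys (PhiB 𝓑) = 𝓑 := by
    ext K
    simp only [minKeys, Set.mem_setOf_eq, h𝓑def]
    constructor
    · rintro ⟨hk, hmin⟩
      exact ⟨(hkeyPhi K).1 hk, fun C' hC' hsub => hmin C' ((hkeyPhi C').2 hC') hsub⟩
    · rintro ⟨hm, hmin⟩
      exact ⟨(hkeyPhi K).2 hm, fun K' hK' hsub => hmin K' ((hkeyPhi K').1 hK') hsub⟩
  refine ⟨?_, hmkPhi, ?_⟩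
  · intro B₁ h1 B₂ h2 hsub
    have h2' : IsCut M B₂ := h2
    have h1' : IsCut M B₁ := h1
    exact h2'.2 B₁ h1'.1 hsub
  · intro h hHorn hmk
    have hkeyh : ∀ K : Finset V, IsKey h K ↔ MeetsAllBases M K := by
      intro K
      constructor
      · intro hK
        obtain ⟨K', hsub, hk', hmin⟩ := exists_min_subset (IsKey h) K hK
        have hmem : K' ∈ minKeys h := ⟨hk', hmin⟩
        rw [hmk] at hmem
        have : IsCut M K' := hmem
        exact hmono K' K this.1 hsub
      · intro hm
        obtain ⟨C, hC, hCK⟩ := hext K hm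
        have hmem : C ∈ minKeys h := by rw [hmk]; exact hC
        exact hkey_up h C K hmem.1 hCK
    have claimA : ∀ x : V → Bool, h x = true → (∃ v, x v = false) →
        ∃ B, M.IsBase B ∧ ((Finset.univ.filter (fun u => x u = true) : Finset V) : Set V) ∩ B = ∅ := by
      intro x hx hex
      obtain ⟨v, hv⟩ := hex
      rw [← hnotmeets]
      intro hm
      have hk := (hkeyh _).2 hm
      have h2 := hk v (by simp [hv]) x hx (fun a ha => by simpa using ha)
      rw [hv] at h2; exact Bool.false_ne_true h2
    have claimB : ∀ B : Set V, M.IsBase B → h (fun u => decide (u ∉ B)) = true := by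
      intro B hB
      have hnm : ¬ MeetsAllBases M (Finset.univ.filter (fun u => u ∉ B)) := by
        intro hm
        obtain ⟨w, hw1, hw2⟩ := hm B hB
        have : w ∉ B := by simpa using hw1
        exact this hw2
      have hnk : ¬ IsKey h (Finset.univ.filter (fun u => u ∉ B)) :=
        fun hk => hnm ((hkeyh _).1 hk)
      simp only [IsKey, Implicate] at hnk
      push_neg at hnk
      obtain ⟨v, hvK, y, hy, hyK, hyv⟩ := hnk
      have hyv' : y v = false := Bool.eq_false_iff.2 hyv
      obtain ⟨B', hB', hdisj⟩ := claimA y hy ⟨v, hyv'⟩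
      have hdisj' : ∀ w, y w = true → w ∈ B' → False := by
        intro w h1 h2
        have : w ∈ ((Finset.univ.filter (fun u => y u = true) : Finset V) : Set V) ∩ B' :=
          ⟨by simp [h1], h2⟩
        rw [hdisj] at this; exact this
      have hsub1 : ∀ u, u ∉ B → y u = true := by
        intro u hu
        exact hyK u (by simp [hu])
      have hB'B : B' ⊆ B := by
        intro w hw
        by_contra hwB
        exact hdisj' w (hsub1 w hwB) hw
      have hBB' : B' = B := hB'.eq_of_subset_isBase hB hB'B
      subst hBB'
      have he : (fun u => decide (u ∉ B')) = y := by
        funext u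
        rw [Bool.eq_iff_iff]
        simp only [decide_eq_true_eq]
        constructor
        · intro hu; exact hsub1 u hu
        · intro hu hub; exact hdisj' u hu hub
      rw [he]; exact hy
    have claimD : ∀ S : Finset V, (∃ B0, M.IsBase B0 ∧ (S : Set V) ∩ B0 = ∅) →
        h (fun u => decide (u ∈ S)) = true := by
      intro S hex
      obtain ⟨B0, hB0, hSB0⟩ := hex
      have hSB0' : ∀ u ∈ S, u ∉ B0 := by
        intro u h1 h2
        have : u ∈ (S : Set V) ∩ B0 := ⟨h1, h2⟩
        rw [hSB0] at this; exact this
      have hx0 : h (fun u => decide (u ∉ B0)) = true := claimB B0 hB0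
      set D : Finset V := (Finset.univ.filter (fun u => u ∉ B0)) \ S with hDdef
      have hstep : ∀ v : V, ∃ g : V → Bool,
          h g = true ∧ (v ∈ D → g v = false) ∧ ∀ u ∈ S, g u = true := by
        intro v
        by_cases hvD : v ∈ D
        · have hv' : v ∉ B0 ∧ v ∉ S := by simpa [hDdef] using hvD
          obtain ⟨Bv, hBv, hvBv, hBvsub⟩ := (hloopless v).exists_isBase_subset_union_isBase hB0
          refine ⟨fun u => decide (u ∉ Bv), claimB Bv hBv, ?_, ?_⟩
          · intro _
            have hvb : v ∈ Bv := hvBv rfl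
            simp [hvb]
          · intro u hu
            have hub : u ∉ Bv := by
              intro huBv
              rcases hBvsub huBv with h' | h'
              · rw [Set.mem_singleton_iff] at h'
                rw [h'] at hu
                exact hv'.2 hu
              · exact hSB0' u hu h'
            simp [hub]
        · exact ⟨fun _ => true, hHorn.1, fun hc => absurd hc hvD, fun _ _ => rfl⟩
      choose f hf1 hf2 hf3 using hstep
      have hmain := horn_and_finset h hHorn _ hx0 D f (fun v _ => hf1 v)
      have he : (fun u => (fun u => decide (u ∉ B0)) u && decide (∀ v ∈ D, f v u = true)) =
          (fun u => decide (u ∈ S)) := by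
        funext u
        rw [Bool.eq_iff_iff]
        simp only [Bool.and_eq_true, decide_eq_true_eq]
        constructor
        · rintro ⟨hu0, hall⟩
          by_contra huS
          have huD : u ∈ D := by simp [hDdef, hu0, huS]
          have h4 := hall u huD
          rw [hf2 u huD] at h4
          exact Bool.false_ne_true h4
        · intro huS
          exact ⟨fun h' => hSB0' u huS h', fun v _ => hf3 v u huS⟩
      rw [he] at hmain; exact hmain
    funext x
    by_cases hall : ∀ v, x v = true
    · have hx : x = fun _ => true := funext fun v => hall v
      rw [hx, hHorn.1]
      exact ((hPhi 𝓑 _).2 (fun C hC hh v => rfl)).symm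
    · push_neg at hall
      obtain ⟨v, hv⟩ := hall
      have hvf : x v = false := Bool.eq_false_iff.2 hv
      have lr : h x = true → PhiB 𝓑 x = true := by
        intro hx
        obtain ⟨B', hB', hdisj⟩ := claimA x hx ⟨v, hvf⟩
        rw [hPhi]
        intro C hC hCx
        exfalso
        have hC' : IsCut M C := hC
        have hCsub : C ⊆ Finset.univ.filter (fun u => x u = true) := by
          intro u hu; simp [hCx u hu]
        have hm : MeetsAllBases M (Finset.univ.filter (fun u => x u = true)) :=
          hmono C _ hC'.1 hCsub
        obtain ⟨w, hw1, hw2⟩ := hm B' hB'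
        have : w ∈ ((Finset.univ.filter (fun u => x u = true) : Finset V) : Set V) ∩ B' :=
          ⟨hw1, hw2⟩
        rw [hdisj] at this; exact this
      have rl : PhiB 𝓑 x = true → h x = true := by
        intro hp
        have hnm : ¬ MeetsAllBases M (Finset.univ.filter (fun u => x u = true)) := by
          intro hm
          obtain ⟨C, hC, hCs⟩ := hext _ hm
          rw [hPhi] at hp
          have h4 := hp C hC (fun u hu => by simpa using hCs hu) v
          rw [hvf] at h4; exact Bool.false_ne_true h4
        rw [hnotmeets] at hnm
        have h5 := claimD _ hnm
        have he : (fun u => decide (u ∈ Finset.univ.filter (fun w => x w = true))) = x := by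
          funext u
          rw [Bool.eq_iff_iff]
          simp
        rwa [he] at h5
      rw [Bool.eq_iff_iff]
      exact ⟨lr, rl⟩
end

section
/- Let V be a finite set and let Φ be a pure Horn CNF on V, i.e. a finite set of clauses (A, v) with A ⊆ V and v ∈ V∖A, and let h_Φ be the Boolean function it defines. Let K(Φ) be the family of inclusion-minimal keys of h_Φ. Let D be a directed graph on vertex set K(Φ) such that for every K ∈ K(Φ), every v ∈ K, and every clause (A, v) ∈ Φ with head v, there is a directed edge from K to some K' ∈ K(Φ) with K' ⊆ (K∖{v}) ∪ A. Then D is strongly connected: for any two minimal keys K_1, K_2 ∈ K(Φ) there is a directed path in D from K_1 to K_2. -/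
/-! Fix the target minimal key `K₂`. Since `K₂` is a key, forward chaining from `K₂` through the
clauses of `Φ` eventually derives every vertex (otherwise the indicator of the derived set would
be a model of `Φ` refuting `K₂ → v`). If a minimal key lies inside stage `n + 1` but not inside stage `n`,
it contains a vertex `v` derived by a clause `(A, v)` with `A` in stage `n`; the edge for that
clause leads to a minimal key with strictly fewer vertices outside stage `n`. Thus every minimal
key is walked down stage by stage into stage `0`, i.e. into `K₂`, where minimality forces it to
be `K₂`. -/

open scoped Classical

variable {V : Type*} [Fintype V] [DecidableEq V]

/-- The Boolean function defined by a pure Horn CNF, given as a finite set of clauses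
`(A, v)`. -/
def cnfFun (Φ : Finset (Finset V × V)) : (V → Bool) → Bool :=
  fun x => decide (∀ c ∈ Φ, (∃ a ∈ c.1, x a = false) ∨ x c.2 = true)

set_option linter.unusedSectionVars false

def forwardChain (Φ : Finset (Finset V × V)) (L : Finset V) : ℕ → Finset V
  | 0 => L
  | i + 1 => forwardChain Φ L i ∪ (Φ.filter fun c => c.1 ⊆ forwardChain Φ L i).image Prod.snd

def HasExchangeEdges (Φ : Finset (Finset V × V)) (E : Finset V → Finset V → Prop) : Prop :=
  ∀ K ∈ minKeys (cnfFun Φ), ∀ v ∈ K, ∀ c ∈ Φ, c.2 = v →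
    ∃ K' ∈ minKeys (cnfFun Φ), K' ⊆ (K \ {v}) ∪ c.1 ∧ E K K'

theorem Monotone.exists_subset_of_forall_exists_mem {α : Type*} {S : ℕ → Finset α}
    (hS : Monotone S) {s : Finset α} (h : ∀ a ∈ s, ∃ i, a ∈ S i) : ∃ i, s ⊆ S i := by
  choose f hf using h
  obtain ⟨N, hN⟩ := Finite.exists_le fun a : s => f a a.2
  exact ⟨N, fun a ha => hS (hN ⟨a, ha⟩) (hf a ha)⟩

section forwardChain

variable {Φ : Finset (Finset V × V)} {L : Finset V}

theorem forwardChain_mono : Monotone (forwardChain Φ L) :=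
  monotone_nat_of_le_succ fun _ => Finset.subset_union_left

theorem exists_clause_of_mem_forwardChain_succ {n : ℕ} {v : V}
    (hv : v ∈ forwardChain Φ L (n + 1)) (hvn : v ∉ forwardChain Φ L n) :
    ∃ c ∈ Φ, c.2 = v ∧ c.1 ⊆ forwardChain Φ L n := by
  simp only [forwardChain, Finset.mem_union, hvn, false_or, Finset.mem_image,
    Finset.mem_filter] at hv
  obtain ⟨c, ⟨hcΦ, hcn⟩, rfl⟩ := hv
  exact ⟨c, hcΦ, rfl, hcn⟩

theorem cnfFun_forwardChainClosure :
    cnfFun Φ (fun u => decide (∃ i, u ∈ forwardChain Φ L i)) = true := by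
  simp only [cnfFun, decide_eq_true_eq, decide_eq_false_iff_not]
  intro c hc
  by_cases hbody : ∀ a ∈ c.1, ∃ i, a ∈ forwardChain Φ L i
  · obtain ⟨i, hi⟩ := forwardChain_mono.exists_subset_of_forall_exists_mem hbody
    right
    refine ⟨i + 1, Finset.mem_union_right _ (Finset.mem_image.2 ⟨c, ?_, rfl⟩)⟩
    exact Finset.mem_filter.2 ⟨hc, hi⟩
  · left
    simpa only [not_forall, exists_prop] using hbody

theorem IsKey.exists_univ_subset_forwardChain (hL : IsKey (cnfFun Φ) L) :
    ∃ N, Finset.univ ⊆ forwardChain Φ L N := by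
  refine forwardChain_mono.exists_subset_of_forall_exists_mem fun v _ => ?_
  by_cases hv : v ∈ L
  · exact ⟨0, hv⟩
  · simpa using hL v hv _ cnfFun_forwardChainClosure fun a ha => decide_eq_true ⟨0, ha⟩

end forwardChain

section exchange

variable {Φ : Finset (Finset V × V)} {E : Finset V → Finset V → Prop} {K₂ : Finset V}

theorem reflTransGen_of_subset_of_forall_clause (hE : HasExchangeEdges Φ E) {S T : Finset V}
    (hST : S ⊆ T) (hT : ∀ v ∈ T, v ∉ S → ∃ c ∈ Φ, c.2 = v ∧ c.1 ⊆ S)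
    (hS : ∀ K ∈ minKeys (cnfFun Φ), K ⊆ S → Relation.ReflTransGen E K K₂)
    (K : Finset V) (hK : K ∈ minKeys (cnfFun Φ)) (hKT : K ⊆ T) :
    Relation.ReflTransGen E K K₂ := by
  by_cases hKS : K ⊆ S
  · exact hS K hK hKS
  obtain ⟨v, hvK, hvS⟩ := Finset.not_subset.1 hKS
  obtain ⟨c, hcΦ, rfl, hcS⟩ := hT v (hKT hvK) hvS
  obtain ⟨K', hK', hK'sub, hKK'⟩ := hE K hK c.2 hvK c hcΦ rfl
  have hK'T : K' ⊆ T :=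
    hK'sub.trans (Finset.union_subset (Finset.sdiff_subset.trans hKT) (hcS.trans hST))
  have hdecr : (K' \ S).card < (K \ S).card := by
    refine Finset.card_lt_card (Finset.ssubset_of_subset_of_ssubset ?_
      (Finset.erase_ssubset (Finset.mem_sdiff.2 ⟨hvK, hvS⟩)))
    intro u hu
    obtain ⟨huK', huS⟩ := Finset.mem_sdiff.1 hu
    obtain huK | huc := Finset.mem_union.1 (hK'sub huK')
    · obtain ⟨huK, huv⟩ := Finset.mem_sdiff.1 huK
      exact Finset.mem_erase.2 ⟨Finset.notMem_singleton.1 huv, Finset.mem_sdiff.2 ⟨huK, huS⟩⟩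
    · exact absurd (hcS huc) huS
  exact .head hKK' (reflTransGen_of_subset_of_forall_clause hE hST hT hS K' hK' hK'T)
termination_by (K \ S).card

theorem reflTransGen_of_subset_forwardChain (hE : HasExchangeEdges Φ E)
    (hK₂ : K₂ ∈ minKeys (cnfFun Φ)) (n : ℕ) :
    ∀ K ∈ minKeys (cnfFun Φ), K ⊆ forwardChain Φ K₂ n → Relation.ReflTransGen E K K₂ := by
  induction n with
  | zero =>
    intro K hK hKK₂
    rw [hK₂.2 K hK.1 hKK₂]
  | succ n ih =>
    exact reflTransGen_of_subset_of_forall_clause hE (forwardChain_mono n.le_succ)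
      (fun _ => exists_clause_of_mem_forwardChain_succ) ih

end exchange

theorem stmt10_general (Φ : Finset (Finset V × V))
    (E : Finset V → Finset V → Prop)
    (hedge : ∀ K ∈ minKeys (cnfFun Φ), ∀ v ∈ K, ∀ c ∈ Φ, c.2 = v →
      ∃ K' ∈ minKeys (cnfFun Φ), K' ⊆ (K \ {v}) ∪ c.1 ∧ E K K') :
    ∀ K₁ ∈ minKeys (cnfFun Φ), ∀ K₂ ∈ minKeys (cnfFun Φ),
      Relation.ReflTransGen E K₁ K₂ := by
  intro K₁ hK₁ K₂ hK₂
  obtain ⟨N, hN⟩ := hK₂.1.exists_univ_subset_forwardChain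
  exact reflTransGen_of_subset_forwardChain hedge hK₂ N K₁ hK₁
    ((Finset.subset_univ K₁).trans hN)

/-- Let `Φ` be a pure Horn CNF and let `D` be a directed graph (edge relation `E`) on the
minimal keys `𝒦(Φ)` such that for every minimal key `K`, every `v ∈ K` and every clause
`(A, v) ∈ Φ` with head `v` there is an edge from `K` to some minimal key
`K' ⊆ (K ∖ {v}) ∪ A`.  Then `D` is strongly connected. -/
theorem stmt10 (Φ : Finset (Finset V × V)) (hΦ : ∀ c ∈ Φ, c.2 ∉ c.1)
    (E : Finset V → Finset V → Prop)
    (hvert : ∀ K K' : Finset V, E K K' → K ∈ minKeys (cnfFun Φ) ∧ K' ∈ minKeys (cnfFun Φ))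
    (hedge : ∀ K ∈ minKeys (cnfFun Φ), ∀ v ∈ K, ∀ c ∈ Φ, c.2 = v →
      ∃ K' ∈ minKeys (cnfFun Φ), K' ⊆ (K \ {v}) ∪ c.1 ∧ E K K') :
    ∀ K₁ ∈ minKeys (cnfFun Φ), ∀ K₂ ∈ minKeys (cnfFun Φ),
      Relation.ReflTransGen E K₁ K₂ :=
  stmt10_general Φ E hedge
end

section
/- Let G = (V, E) be a finite simple graph and let t : V → ℕ be a threshold function. Define Ψ_G to be the pure Horn CNF consisting of the clauses A → v for every v ∈ V and every subset A ⊆ N(v) with |A| = t(v). Then a set K ⊆ V is a target set of (G, t) if and only if K is a key of the Boolean function defined by Ψ_G. -/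
open scoped Classical

variable {V : Type*} [Fintype V] [DecidableEq V]

/-- `W` is closed under the activation process in `(G, t)`: every vertex having at least
`t v` neighbors in `W` already belongs to `W`. -/
def ActClosed (G : SimpleGraph V) (t : V → ℕ) (W : Finset V) : Prop :=
  ∀ v : V, t v ≤ ({u | G.Adj v u} ∩ (W : Set V)).ncard → v ∈ W

/-- `S` is a target set of `(G, t)`: the activation closure of `S` (the smallest
activation-closed superset of `S`) is all of `V`, equivalently every activation-closed
superset of `S` is all of `V`. -/
def IsTargetSet (G : SimpleGraph V) (t : V → ℕ) (S : Finset V) : Prop :=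
  ∀ W : Finset V, S ⊆ W → ActClosed G t W → W = Finset.univ

/-- The pure Horn CNF `Ψ_G` consisting of the clauses `A → v` for every `v ∈ V` and every
`A ⊆ N(v)` with `|A| = t v`. -/
noncomputable def PsiG (G : SimpleGraph V) (t : V → ℕ) : (V → Bool) → Bool :=
  fun x => decide (∀ v : V, ∀ A : Finset V, (A : Set V) ⊆ {u | G.Adj v u} → A.card = t v →
    ((∃ a ∈ A, x a = false) ∨ x v = true))

/-!
The true assignments of `Ψ_G` are exactly the indicator functions of the activation-closed
sets: the clauses with head `v` say precisely that `v` is true as soon as `t v` of its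
neighbours are. Hence `K → v` is an implicate for all `v ∉ K` iff every activation-closed
superset of `K` is all of `V`, which is the definition of a target set.
-/

open Finset

lemma Set.forall_finset_subset_card_eq_imp_iff {α : Type*} [Finite α] {s : Set α} {k : ℕ}
    {p : Prop} : (∀ A : Finset α, (A : Set α) ⊆ s → #A = k → p) ↔ (k ≤ s.ncard → p) := by
  refine ⟨fun h hk => ?_, fun h A hA hcard => h ?_⟩
  · obtain ⟨T, hTs, hTcard⟩ := Set.exists_subset_card_eq hk
    have hT : T.Finite := T.toFinite
    exact h hT.toFinset (by simpa using hTs) (by rw [← Set.ncard_eq_toFinset_card T hT, hTcard])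
  · rw [← hcard, ← Set.ncard_coe_finset]
    exact Set.ncard_le_ncard hA

section

variable {α : Type*} [Fintype α]

def trueSet (x : α → Bool) : Finset α := univ.filter (x · = true)

@[simp]
lemma mem_trueSet {x : α → Bool} {v : α} : v ∈ trueSet x ↔ x v = true := by
  simp [trueSet]

lemma trueSet_surjective : Function.Surjective (trueSet (α := α)) :=
  fun W => ⟨(decide <| · ∈ W), by ext; simp⟩

lemma clause_sat_iff (x : α → Bool) (A : Finset α) (v : α) :
    ((∃ a ∈ A, x a = false) ∨ x v = true) ↔ ((A : Set α) ⊆ trueSet x → x v = true) := by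
  rw [imp_iff_not_or]
  congr! 1
  simp [Set.subset_def]

lemma isKey_iff_forall_trueSet_eq_univ (h : (α → Bool) → Bool) (K : Finset α) :
    IsKey h K ↔ ∀ x, h x = true → K ⊆ trueSet x → trueSet x = univ := by
  simp only [IsKey, Implicate, subset_iff, mem_trueSet, eq_univ_iff_forall]
  exact ⟨fun hK x hx hKx v => if hv : v ∈ K then hKx hv else hK v hv x hx @hKx,
    fun hK v _ x hx hKx => hK x hx @hKx v⟩

lemma psiG_eq_true_iff_actClosed (G : SimpleGraph α) (t : α → ℕ)
    (x : α → Bool) : PsiG G t x = true ↔ ActClosed G t (trueSet x) := by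
  simp only [PsiG, decide_eq_true_iff, ActClosed, clause_sat_iff]
  refine forall_congr' fun v => ?_
  rw [← Set.forall_finset_subset_card_eq_imp_iff, mem_trueSet]
  simp only [Set.subset_inter_iff]
  exact ⟨fun h A hA hcard => h A hA.1 hcard hA.2, fun h A hAN hcard hAx => h A ⟨hAN, hAx⟩ hcard⟩

end

/-- `K ⊆ V` is a target set of `(G, t)` iff `K` is a key of the Boolean function defined by
the pure Horn CNF `Ψ_G`. -/
theorem stmt11 (G : SimpleGraph V) (t : V → ℕ) (K : Finset V) :
    IsTargetSet G t K ↔ IsKey (PsiG G t) K := by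
  rw [isKey_iff_forall_trueSet_eq_univ, IsTargetSet, trueSet_surjective.forall]
  simp only [psiG_eq_true_iff_actClosed]
  exact forall_congr' fun x => imp.swap
end
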